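/- arXiv:2207.02181 — 3 statements merged into one kernel-verified Lean document; each statement's English description precedes it below -/
import Mathlib

section
/- The gauge sphere ∂B_R(0,0,t₀) ⊂ ℍⁿ (n ≥ 2) is horizontally umbilic with A_M(Z) = (2r/R²)⟨η,Z⟩η + (r/R²)Z for all horizontal tangent vectors Z, i.e., it is umbilic with l = 3k and k(ξ) = |ξ^H|/R². -/
open scoped BigOperators

/-- Points of the Heisenberg group `ℍⁿ = ℝⁿ × ℝⁿ × ℝ`. -/
abbrev Hpt (n : ℕ) := (Fin n → ℝ) × (Fin n → ℝ) × ℝ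

/-- Horizontal vectors, written in the frame `{X₁,…,Xₙ,Y₁,…,Yₙ}`. -/
abbrev HV (n : ℕ) := (Fin n → ℝ) × (Fin n → ℝ)

noncomputable section

/-- Inner product on the horizontal space (the frame `{Xⱼ, Yⱼ}` is orthonormal). -/
def innerHV {n : ℕ} (v w : HV n) : ℝ := ∑ j, v.1 j * w.1 j + ∑ j, v.2 j * w.2 j

/-- The complex structure `J` on the horizontal space: `J Xⱼ = Yⱼ`, `J Yⱼ = -Xⱼ`. -/
def Jmap {n : ℕ} (v : HV n) : HV n := (-v.2, v.1)

/-- Horizontal part of the position vector: `ξ^H = ∑ xⱼ Xⱼ + yⱼ Yⱼ`. -/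
def xiH {n : ℕ} (ξ : Hpt n) : HV n := (ξ.1, ξ.2.1)

/-- `|ξ^H| = √(|x|² + |y|²)`. -/
def normH {n : ℕ} (ξ : Hpt n) : ℝ := Real.sqrt (innerHV (xiH ξ) (xiH ξ))

/-- Coordinate representation of the horizontal vector `Z = ∑ αⱼ Xⱼ + βⱼ Yⱼ` at `ξ`
(using `Xⱼ = ∂_{xⱼ} - 2yⱼ∂_t`, `Yⱼ = ∂_{yⱼ} + 2xⱼ∂_t`). -/
def coordOfH {n : ℕ} (Z : HV n) (ξ : Hpt n) : Hpt n :=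
  (Z.1, Z.2, ∑ j, (-2 * Z.1 j * ξ.2.1 j + 2 * Z.2 j * ξ.1 j))

/-- Coordinate representation of a full frame vector `v = ∑ aⱼ Xⱼ + bⱼ Yⱼ + c T` at `ξ`. -/
def coordOfF {n : ℕ} (v : Hpt n) (ξ : Hpt n) : Hpt n :=
  (v.1, v.2.1, v.2.2 + ∑ j, (-2 * v.1 j * ξ.2.1 j + 2 * v.2.1 j * ξ.1 j))

/-- Inner product on the full tangent space in the orthonormal frame `{Xⱼ, Yⱼ, T}`. -/
def innerF {n : ℕ} (v w : Hpt n) : ℝ :=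
  ∑ j, v.1 j * w.1 j + ∑ j, v.2.1 j * w.2.1 j + v.2.2 * w.2.2

/-- Levi-Civita covariant derivative `∇_Z W` of a horizontal vector field `W`
along a horizontal vector `Z`, expressed in the frame `{Xⱼ, Yⱼ, T}`; the `T`-component
comes from `∇_{Xᵢ}Yⱼ = 2δᵢⱼT`, `∇_{Yᵢ}Xⱼ = -2δᵢⱼT`. -/
def hCovDeriv {n : ℕ} (Z : HV n) (W : Hpt n → HV n) (ξ : Hpt n) : Hpt n :=
  ((fderiv ℝ W ξ (coordOfH Z ξ)).1, (fderiv ℝ W ξ (coordOfH Z ξ)).2,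
    2 * ∑ i, (Z.1 i * (W ξ).2 i - Z.2 i * (W ξ).1 i))

/-- Levi-Civita covariant derivative `∇_U W` of a horizontal vector field `W` along a full
frame vector `U`, using additionally `∇_T Xⱼ = -2Yⱼ`, `∇_T Yⱼ = 2Xⱼ`. -/
def fullCovDeriv {n : ℕ} (U : Hpt n) (W : Hpt n → HV n) (ξ : Hpt n) : Hpt n :=
  ((fderiv ℝ W ξ (coordOfF U ξ)).1 + (2 * U.2.2) • (W ξ).2,
   (fderiv ℝ W ξ (coordOfF U ξ)).2 - (2 * U.2.2) • (W ξ).1,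
   2 * ∑ i, (U.1 i * (W ξ).2 i - U.2.1 i * (W ξ).1 i))

/-- The coordinate direction of `Xⱼ = ∂_{xⱼ} - 2yⱼ∂_t` at `ξ`. -/
def Xdir {n : ℕ} (j : Fin n) (ξ : Hpt n) : Hpt n := (Pi.single j 1, 0, -2 * ξ.2.1 j)

/-- The coordinate direction of `Yⱼ = ∂_{yⱼ} + 2xⱼ∂_t` at `ξ`. -/
def Ydir {n : ℕ} (j : Fin n) (ξ : Hpt n) : Hpt n := (0, Pi.single j 1, 2 * ξ.1 j)

/-- `Xⱼ u`. -/
def XD {n : ℕ} (u : Hpt n → ℝ) (j : Fin n) (ξ : Hpt n) : ℝ := fderiv ℝ u ξ (Xdir j ξ)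

/-- `Yⱼ u`. -/
def YD {n : ℕ} (u : Hpt n → ℝ) (j : Fin n) (ξ : Hpt n) : ℝ := fderiv ℝ u ξ (Ydir j ξ)

/-- `T u = ∂_t u`. -/
def TD {n : ℕ} (u : Hpt n → ℝ) (ξ : Hpt n) : ℝ := fderiv ℝ u ξ (0, 0, 1)

/-- The horizontal gradient `∇_H u = ∑ (Xⱼu) Xⱼ + (Yⱼu) Yⱼ` in frame components. -/
def hgrad {n : ℕ} (u : Hpt n → ℝ) (ξ : Hpt n) : HV n :=
  (fun j => XD u j ξ, fun j => YD u j ξ)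

/-- Frame components of a coordinate vector `w` at the point `ξ`. -/
def frameAt {n : ℕ} (w : Hpt n) (ξ : Hpt n) : Hpt n :=
  (w.1, w.2.1, w.2.2 + ∑ j, (2 * w.1 j * ξ.2.1 j - 2 * w.2.1 j * ξ.1 j))

/-- A horizontal vector field viewed as a frame vector field with zero `T`-component. -/
def hlift {n : ℕ} (Z : Hpt n → HV n) : Hpt n → Hpt n := fun ξ => ((Z ξ).1, (Z ξ).2, 0)

/-- Coordinate representation of a frame vector field. -/
def coordVF {n : ℕ} (U : Hpt n → Hpt n) : Hpt n → Hpt n := fun ξ => coordOfF (U ξ) ξ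

/-- The Lie bracket `[U, V]` of two frame vector fields, expressed again in frame components. -/
def bracket {n : ℕ} (U V : Hpt n → Hpt n) (ξ : Hpt n) : Hpt n :=
  frameAt (fderiv ℝ (coordVF V) ξ (coordVF U ξ) - fderiv ℝ (coordVF U) ξ (coordVF V ξ)) ξ

/-- The Heisenberg group law. -/
def Hop {n : ℕ} (a b : Hpt n) : Hpt n :=
  (a.1 + b.1, a.2.1 + b.2.1,
    a.2.2 + b.2.2 + 2 * ∑ k, (a.1 k * b.2.1 k - a.2.1 k * b.1 k))

/-- The homogeneous gauge `ρ(ξ) = ((|x|²+|y|²)² + t²)^(1/4)`. -/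
def hGauge {n : ℕ} (ξ : Hpt n) : ℝ :=
  ((∑ j, ξ.1 j ^ 2 + ∑ j, ξ.2.1 j ^ 2) ^ 2 + ξ.2.2 ^ 2) ^ ((1 : ℝ) / 4)

/-- The anisotropic dilations `δ_R(x,y,t) = (Rx, Ry, R²t)`. -/
def dil {n : ℕ} (R : ℝ) (ξ : Hpt n) : Hpt n :=
  (fun j => R * ξ.1 j, fun j => R * ξ.2.1 j, R ^ 2 * ξ.2.2)

end

/-- Defining function of the gauge sphere ∂B_R(0,0,t₀). -/
noncomputable def uSph {n : ℕ} (t₀ R : ℝ) : Hpt n → ℝ := fun ξ =>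
  (∑ j, ξ.1 j ^ 2 + ∑ j, ξ.2.1 j ^ 2) ^ 2 + (ξ.2.2 - t₀) ^ 2 - R ^ 4

/-- Distance to the t-axis: r = √(|x|² + |y|²). -/
noncomputable def rad {n : ℕ} (ξ : Hpt n) : ℝ :=
  Real.sqrt (∑ j, ξ.1 j ^ 2 + ∑ j, ξ.2.1 j ^ 2)

/-- The horizontal unit normal of the gauge sphere: ν^H = ∇_H u / |∇_H u|. -/
noncomputable def nuHgauge {n : ℕ} (t₀ R : ℝ) (ξ : Hpt n) : HV n :=
  (Real.sqrt (innerHV (hgrad (uSph t₀ R) ξ) (hgrad (uSph t₀ R) ξ)))⁻¹ • hgrad (uSph t₀ R) ξ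

/-- η = −Jν^H for the gauge sphere. -/
noncomputable def etaGauge {n : ℕ} (t₀ R : ℝ) (ξ : Hpt n) : HV n :=
  -(Jmap (nuHgauge t₀ R ξ))

/-!
On the gauge sphere `∇_H u = 4 (r² ξ^H + (t - t₀) J ξ^H)` has length `4 R² r`, so `ν^H` and
`η = -J ν^H` are explicit combinations of `ξ^H` and `J ξ^H`. Differentiating
`ν^H = ∇_H u / |∇_H u|` along `Z` by the quotient rule writes `A_M(Z)` in terms of the four vectors
`ξ^H, J ξ^H, Z, J Z`; comparing coefficients, the claimed identity reduces to the tangency relation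
`r² ⟨ξ^H, Z⟩ + (t - t₀) ⟨J ξ^H, Z⟩ = 0` and the sphere equation `r⁴ + (t - t₀)² = R⁴`.
-/

section HorizontalAlgebra

variable {n : ℕ}

lemma innerHV_comm (v w : HV n) : innerHV v w = innerHV w v := by
  simp only [innerHV, mul_comm]

lemma innerHV_self_nonneg (v : HV n) : 0 ≤ innerHV v v := by
  unfold innerHV
  exact add_nonneg (Finset.sum_nonneg fun j _ => mul_self_nonneg _)
    (Finset.sum_nonneg fun j _ => mul_self_nonneg _)

lemma innerHV_add_left (u v w : HV n) : innerHV (u + v) w = innerHV u w + innerHV v w := by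
  simp only [innerHV, Prod.fst_add, Prod.snd_add, Pi.add_apply, add_mul, Finset.sum_add_distrib]
  ring

lemma innerHV_smul_left (c : ℝ) (v w : HV n) : innerHV (c • v) w = c * innerHV v w := by
  simp only [innerHV, Prod.smul_fst, Prod.smul_snd, Pi.smul_apply, smul_eq_mul, mul_assoc,
    ← Finset.mul_sum, mul_add]

lemma innerHV_add_right (u v w : HV n) : innerHV u (v + w) = innerHV u v + innerHV u w := by
  simp only [innerHV_comm u, innerHV_add_left]

lemma innerHV_smul_right (c : ℝ) (v w : HV n) : innerHV v (c • w) = c * innerHV v w := by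
  simp only [innerHV_comm v, innerHV_smul_left]

lemma innerHV_neg_left (v w : HV n) : innerHV (-v) w = -innerHV v w := by
  simpa using innerHV_smul_left (-1) v w

lemma innerHV_sub_left (u v w : HV n) : innerHV (u - v) w = innerHV u w - innerHV v w := by
  rw [sub_eq_add_neg, innerHV_add_left, innerHV_neg_left, sub_eq_add_neg]

lemma Jmap_add (v w : HV n) : Jmap (v + w) = Jmap v + Jmap w := by
  simp only [Jmap, Prod.fst_add, Prod.snd_add, neg_add, Prod.mk_add_mk]

lemma Jmap_smul (c : ℝ) (v : HV n) : Jmap (c • v) = c • Jmap v := by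
  simp only [Jmap, Prod.smul_fst, Prod.smul_snd, smul_neg, Prod.smul_mk]

lemma Jmap_Jmap (v : HV n) : Jmap (Jmap v) = -v := rfl

lemma innerHV_Jmap_Jmap (v w : HV n) : innerHV (Jmap v) (Jmap w) = innerHV v w := by
  simp only [innerHV, Jmap, Pi.neg_apply, neg_mul_neg]
  ring

lemma innerHV_Jmap_right (v w : HV n) : innerHV v (Jmap w) = -innerHV (Jmap v) w := by
  rw [← innerHV_Jmap_Jmap v, Jmap_Jmap, innerHV_comm, innerHV_neg_left, innerHV_comm]

lemma innerHV_Jmap_self (v : HV n) : innerHV v (Jmap v) = 0 := by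
  have h := innerHV_Jmap_right v v
  rw [innerHV_comm (Jmap v)] at h
  linarith

lemma innerHV_Jmap_self_left (v : HV n) : innerHV (Jmap v) v = 0 := by
  rw [innerHV_comm, innerHV_Jmap_self]

noncomputable def innerHVL : HV n →L[ℝ] HV n →L[ℝ] ℝ :=
  LinearMap.toContinuousLinearMap <| LinearMap.toContinuousLinearMap.toLinearMap ∘ₗ
    LinearMap.mk₂ ℝ innerHV innerHV_add_left innerHV_smul_left innerHV_add_right
      innerHV_smul_right

@[simp] lemma innerHVL_apply (v w : HV n) : innerHVL v w = innerHV v w := rfl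

def xiHL : Hpt n →L[ℝ] HV n :=
  (ContinuousLinearMap.fst ℝ _ _).prod
    ((ContinuousLinearMap.fst ℝ _ _).comp (ContinuousLinearMap.snd ℝ (Fin n → ℝ) _))

@[simp] lemma xiHL_apply (v : Hpt n) : xiHL v = xiH v := rfl

def JmapL : HV n →L[ℝ] HV n :=
  (-ContinuousLinearMap.snd ℝ _ _).prod (ContinuousLinearMap.fst ℝ (Fin n → ℝ) _)

@[simp] lemma JmapL_apply (v : HV n) : JmapL v = Jmap v := rfl

end HorizontalAlgebra

section Normalize

variable {n : ℕ} {E : Type*} [NormedAddCommGroup E] [NormedSpace ℝ E]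

lemma fderiv_normalize_apply {F : E → HV n} {F' : E →L[ℝ] HV n} {x : E}
    (hF : HasFDerivAt F F' x) (hx : innerHV (F x) (F x) ≠ 0) (v : E) :
    fderiv ℝ (fun y => (√(innerHV (F y) (F y)))⁻¹ • F y) x v =
      (√(innerHV (F x) (F x)))⁻¹ • F' v
        - (innerHV (F x) (F' v) / √(innerHV (F x) (F x)) ^ 3) • F x := by
  have hN : √(innerHV (F x) (F x)) ≠ 0 :=
    Real.sqrt_ne_zero'.2 (lt_of_le_of_ne (innerHV_self_nonneg _) hx.symm)
  have hsqrt := (innerHVL.hasFDerivAt_of_bilinear hF hF).sqrt hx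
  have hν : HasFDerivAt (fun y => (√(innerHV (F y) (F y)))⁻¹ • F y) _ x :=
    ((hasDerivAt_inv hN).comp_hasFDerivAt x hsqrt).smul hF
  rw [hν.fderiv]
  simp only [innerHVL_apply, Function.comp_apply, one_div, mul_inv_rev,
    ContinuousLinearMap.precompR_apply, ContinuousLinearMap.compL_apply, smul_add, neg_smul,
    add_apply, smul_apply, ContinuousLinearMap.smulRight_apply, neg_apply,
    ContinuousLinearMap.comp_apply, smul_eq_mul, ContinuousLinearMap.precompL_apply]
  rw [innerHV_comm (F' v)]
  match_scalars
  field_simp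
  ring

end Normalize

section HorizontalGradient

variable {n : ℕ}

lemma xiH_coordOfH (Z : HV n) (ξ : Hpt n) : xiH (coordOfH Z ξ) = Z := rfl

lemma coordOfH_snd_snd (Z : HV n) (ξ : Hpt n) :
    (coordOfH Z ξ).2.2 = 2 * innerHV (Jmap (xiH ξ)) Z := by
  simp only [coordOfH, innerHV, Jmap, xiH, Pi.neg_apply, Finset.mul_sum, ← Finset.sum_add_distrib]
  exact Finset.sum_congr rfl fun j _ => by ring

-- Since `Xⱼ = ∂_{xⱼ} - 2yⱼ∂_t` and `Yⱼ = ∂_{yⱼ} + 2xⱼ∂_t`, the `t`-derivative enters `∇_H u`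
-- as `2 (Tu) J ξ^H`.
lemma hgrad_eq_of_fderiv {u : Hpt n → ℝ} {ξ : Hpt n} {g : HV n} {c : ℝ}
    (hu : ∀ v, fderiv ℝ u ξ v = innerHV g (xiH v) + c * v.2.2) :
    hgrad u ξ = g + (2 * c) • Jmap (xiH ξ) := by
  ext j <;> simp [hgrad, XD, YD, Xdir, Ydir, hu, innerHV, xiH, Jmap, Pi.single_apply] <;> ring

lemma TD_eq_of_fderiv {u : Hpt n → ℝ} {ξ : Hpt n} {g : HV n} {c : ℝ}
    (hu : ∀ v, fderiv ℝ u ξ v = innerHV g (xiH v) + c * v.2.2) : TD u ξ = c := by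
  simp [TD, hu, innerHV, xiH]

end HorizontalGradient

section GaugeFunction

variable {n : ℕ}

lemma sum_sq_add_sum_sq_eq_innerHV (ξ : Hpt n) :
    ∑ j, ξ.1 j ^ 2 + ∑ j, ξ.2.1 j ^ 2 = innerHV (xiH ξ) (xiH ξ) := by
  simp only [sq]
  rfl

lemma uSph_eq (t₀ R : ℝ) :
    uSph t₀ R = fun ξ : Hpt n => innerHV (xiH ξ) (xiH ξ) ^ 2 + (ξ.2.2 - t₀) ^ 2 - R ^ 4 := by
  funext ξ
  simp only [uSph, sum_sq_add_sum_sq_eq_innerHV]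

lemma rad_eq_normH (ξ : Hpt n) : rad ξ = normH ξ := by
  rw [rad, normH, sum_sq_add_sum_sq_eq_innerHV]

lemma hasFDerivAt_innerHV_xiH (ξ : Hpt n) :
    HasFDerivAt (fun ξ : Hpt n => innerHV (xiH ξ) (xiH ξ))
      (innerHVL.precompR _ (xiH ξ) xiHL + innerHVL.precompL _ xiHL (xiH ξ)) ξ :=
  innerHVL.hasFDerivAt_of_bilinear xiHL.hasFDerivAt xiHL.hasFDerivAt

lemma fderiv_uSph_apply (t₀ R : ℝ) (ξ v : Hpt n) :
    fderiv ℝ (uSph t₀ R) ξ v =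
      innerHV ((4 * innerHV (xiH ξ) (xiH ξ)) • xiH ξ) (xiH v) + 2 * (ξ.2.2 - t₀) * v.2.2 := by
  have hτ := (hasFDerivAt_snd (𝕜 := ℝ) (p := ξ)).snd.sub_const t₀
  have h : HasFDerivAt
      (fun ξ : Hpt n => innerHV (xiH ξ) (xiH ξ) ^ 2 + (ξ.2.2 - t₀) ^ 2 - R ^ 4) _ ξ :=
    (((hasFDerivAt_innerHV_xiH ξ).pow 2).add (hτ.pow 2)).sub_const (R ^ 4)
  rw [uSph_eq, h.fderiv]
  simp only [Nat.add_one_sub_one, pow_one, nsmul_eq_mul, Nat.cast_ofNat,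
    ContinuousLinearMap.precompR_apply, ContinuousLinearMap.compL_apply, smul_add, add_apply,
    smul_apply, ContinuousLinearMap.comp_apply, xiHL_apply, innerHVL_apply, smul_eq_mul,
    ContinuousLinearMap.precompL_apply, ContinuousLinearMap.coe_snd']
  rw [innerHV_smul_left, innerHV_comm (xiH v)]
  ring

lemma hgrad_uSph (t₀ R : ℝ) (ξ : Hpt n) :
    hgrad (uSph t₀ R) ξ =
      (4 : ℝ) • (innerHV (xiH ξ) (xiH ξ) • xiH ξ + (ξ.2.2 - t₀) • Jmap (xiH ξ)) := by
  rw [hgrad_eq_of_fderiv (fderiv_uSph_apply t₀ R ξ)]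
  module

lemma TD_uSph (t₀ R : ℝ) (ξ : Hpt n) : TD (uSph t₀ R) ξ = 2 * (ξ.2.2 - t₀) :=
  TD_eq_of_fderiv (fderiv_uSph_apply t₀ R ξ)

lemma innerHV_hgrad_uSph (t₀ R : ℝ) (ξ : Hpt n) :
    innerHV (hgrad (uSph t₀ R) ξ) (hgrad (uSph t₀ R) ξ) =
      16 * (innerHV (xiH ξ) (xiH ξ) ^ 2 + (ξ.2.2 - t₀) ^ 2) * innerHV (xiH ξ) (xiH ξ) := by
  simp only [hgrad_uSph, innerHV_add_left, innerHV_add_right, innerHV_smul_left,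
    innerHV_smul_right, innerHV_Jmap_Jmap, innerHV_Jmap_self, innerHV_Jmap_self_left]
  ring

noncomputable def hgradUSphDeriv (t₀ : ℝ) (ξ v : Hpt n) : HV n :=
  (4 : ℝ) • ((2 * innerHV (xiH ξ) (xiH v)) • xiH ξ + innerHV (xiH ξ) (xiH ξ) • xiH v
    + v.2.2 • Jmap (xiH ξ) + (ξ.2.2 - t₀) • Jmap (xiH v))

lemma fderiv_nuHgauge_apply (t₀ R : ℝ) (ξ v : Hpt n)
    (hq : innerHV (hgrad (uSph t₀ R) ξ) (hgrad (uSph t₀ R) ξ) ≠ 0) :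
    fderiv ℝ (nuHgauge t₀ R) ξ v =
      (√(innerHV (hgrad (uSph t₀ R) ξ) (hgrad (uSph t₀ R) ξ)))⁻¹ • hgradUSphDeriv t₀ ξ v
        - (innerHV (hgrad (uSph t₀ R) ξ) (hgradUSphDeriv t₀ ξ v)
            / √(innerHV (hgrad (uSph t₀ R) ξ) (hgrad (uSph t₀ R) ξ)) ^ 3)
          • hgrad (uSph t₀ R) ξ := by
  have hτ := (hasFDerivAt_snd (𝕜 := ℝ) (p := ξ)).snd.sub_const t₀
  obtain ⟨G', hG, hG'v⟩ : ∃ G' : Hpt n →L[ℝ] HV n,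
      HasFDerivAt (hgrad (uSph t₀ R)) G' ξ ∧ G' v = hgradUSphDeriv t₀ ξ v := by
    refine ⟨_, ((((hasFDerivAt_innerHV_xiH ξ).smul xiHL.hasFDerivAt).add
      (hτ.smul (JmapL.comp xiHL).hasFDerivAt)).const_smul (4 : ℝ)).congr_of_eventuallyEq
        (.of_forall (hgrad_uSph t₀ R)), ?_⟩
    simp only [hgradUSphDeriv, ContinuousLinearMap.precompR_apply,
      ContinuousLinearMap.compL_apply, xiHL_apply, ContinuousLinearMap.comp_apply, JmapL_apply,
      smul_add, add_apply, smul_apply, ContinuousLinearMap.smulRight_apply, innerHVL_apply,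
      ContinuousLinearMap.precompL_apply, ContinuousLinearMap.coe_snd', innerHV_comm (xiH v)]
    module
  rw [← hG'v]
  exact fderiv_normalize_apply hG hq v

end GaugeFunction

section OnTheSphere

variable {n : ℕ} {t₀ R : ℝ} {ξ : Hpt n}

lemma innerHV_xiH_self_eq_rad_sq (ξ : Hpt n) : innerHV (xiH ξ) (xiH ξ) = rad ξ ^ 2 := by
  rw [rad_eq_normH, normH, Real.sq_sqrt (innerHV_self_nonneg _)]

lemma rad_pow_four_add_of_mem (hmem : uSph t₀ R ξ = 0) :
    rad ξ ^ 4 + (ξ.2.2 - t₀) ^ 2 = R ^ 4 := by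
  rw [uSph, sum_sq_add_sum_sq_eq_innerHV, innerHV_xiH_self_eq_rad_sq] at hmem
  linear_combination hmem

lemma sqrt_innerHV_hgrad_uSph_of_mem (hmem : uSph t₀ R ξ = 0) :
    √(innerHV (hgrad (uSph t₀ R) ξ) (hgrad (uSph t₀ R) ξ)) = 4 * R ^ 2 * rad ξ := by
  rw [innerHV_hgrad_uSph, innerHV_xiH_self_eq_rad_sq, ← pow_mul, rad_pow_four_add_of_mem hmem,
    show 16 * R ^ 4 * rad ξ ^ 2 = (4 * R ^ 2 * rad ξ) ^ 2 by ring]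
  exact Real.sqrt_sq (by unfold rad; positivity)

lemma nuHgauge_of_mem (hmem : uSph t₀ R ξ = 0) :
    nuHgauge t₀ R ξ =
      (R ^ 2 * rad ξ)⁻¹ • (rad ξ ^ 2 • xiH ξ + (ξ.2.2 - t₀) • Jmap (xiH ξ)) := by
  rw [nuHgauge, sqrt_innerHV_hgrad_uSph_of_mem hmem, hgrad_uSph, innerHV_xiH_self_eq_rad_sq]
  match_scalars <;> ring

lemma etaGauge_of_mem (hmem : uSph t₀ R ξ = 0) :
    etaGauge t₀ R ξ =
      (R ^ 2 * rad ξ)⁻¹ • ((ξ.2.2 - t₀) • xiH ξ - rad ξ ^ 2 • Jmap (xiH ξ)) := by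
  rw [etaGauge, nuHgauge_of_mem hmem, Jmap_smul, Jmap_add, Jmap_smul, Jmap_smul, Jmap_Jmap]
  module

lemma tangent_of_mem (hmem : uSph t₀ R ξ = 0) (hr : 0 < rad ξ) (hR : 0 < R) {Z : HV n}
    (htan : innerHV Z (nuHgauge t₀ R ξ) = 0) :
    rad ξ ^ 2 * innerHV (xiH ξ) Z + (ξ.2.2 - t₀) * innerHV (Jmap (xiH ξ)) Z = 0 := by
  rw [innerHV_comm, nuHgauge_of_mem hmem, innerHV_smul_left, innerHV_add_left, innerHV_smul_left,
    innerHV_smul_left] at htan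
  exact (mul_eq_zero.1 htan).resolve_left (by positivity)

end OnTheSphere

lemma prodMk_hCovDeriv {n : ℕ} (Z : HV n) (W : Hpt n → HV n) (ξ : Hpt n) :
    ((hCovDeriv Z W ξ).1, (hCovDeriv Z W ξ).2.1) = fderiv ℝ W ξ (coordOfH Z ξ) := rfl

theorem gauge_sphere_umbilic_general (n : ℕ) (t₀ R : ℝ) (hR : 0 < R)
    (ξ : Hpt n) (hmem : uSph t₀ R ξ = 0) (hr : 0 < rad ξ)
    (Z : HV n) (htan : innerHV Z (nuHgauge t₀ R ξ) = 0) :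
    ((hCovDeriv Z (nuHgauge t₀ R) ξ).1, (hCovDeriv Z (nuHgauge t₀ R) ξ).2.1)
      - (2 * TD (uSph t₀ R) ξ /
          Real.sqrt (innerHV (hgrad (uSph t₀ R) ξ) (hgrad (uSph t₀ R) ξ)))
        • (Jmap Z - innerHV (etaGauge t₀ R ξ) Z • nuHgauge t₀ R ξ)
    = (2 * rad ξ / R ^ 2 * innerHV (etaGauge t₀ R ξ) Z) • etaGauge t₀ R ξ
      + (rad ξ / R ^ 2) • Z := by
  have htan' := tangent_of_mem hmem hr hR htan
  have hsph := rad_pow_four_add_of_mem hmem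
  have hq : innerHV (hgrad (uSph t₀ R) ξ) (hgrad (uSph t₀ R) ξ) ≠ 0 := by
    rw [innerHV_hgrad_uSph, innerHV_xiH_self_eq_rad_sq]
    positivity
  rw [prodMk_hCovDeriv, fderiv_nuHgauge_apply t₀ R ξ _ hq, TD_uSph,
    sqrt_innerHV_hgrad_uSph_of_mem hmem, etaGauge_of_mem hmem, nuHgauge_of_mem hmem, hgrad_uSph,
    hgradUSphDeriv, xiH_coordOfH, coordOfH_snd_snd, innerHV_xiH_self_eq_rad_sq]
  simp only [innerHV_add_left, innerHV_add_right, innerHV_smul_left, innerHV_smul_right,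
    innerHV_sub_left, innerHV_neg_left, innerHV_Jmap_self_left, innerHV_Jmap_right, Jmap_add,
    Jmap_smul, Jmap_Jmap, innerHV_xiH_self_eq_rad_sq]
  have hr' := hr.ne'
  have hR' := hR.ne'
  -- coefficients of `ξ^H`, `J ξ^H` and `J Z`; that of `Z` is settled by `field_simp`
  match_scalars <;> field_simp
  · linear_combination (-8 * innerHV (xiH ξ) Z) * hsph - 4 * rad ξ ^ 2 * htan'
  · linear_combination (-8 * rad ξ ^ 2 * innerHV (Jmap (xiH ξ)) Z) * hsph
      - 4 * rad ξ ^ 2 * (ξ.2.2 - t₀) * htan'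
  · ring

/-- The gauge sphere in ℍⁿ (n ≥ 2) is horizontally umbilic:
for every horizontal tangent vector Z at a non-characteristic point,
A_M(Z) = P_H(∇_Z ν^H) − (2⟨ν,T⟩/|P_H ν|)(J(Z) − ⟨η,Z⟩ν^H)
       = (2r/R²)⟨η,Z⟩η + (r/R²)Z,
i.e. it is umbilic with l = 3k and k = |ξ^H|/R².  Here
2⟨ν,T⟩/|P_H ν| = 2Tu/|∇_H u|. -/
theorem gauge_sphere_umbilic (n : ℕ) (hn : 2 ≤ n) (t₀ R : ℝ) (hR : 0 < R)
    (ξ : Hpt n) (hmem : uSph t₀ R ξ = 0) (hr : 0 < rad ξ)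
    (Z : HV n) (htan : innerHV Z (nuHgauge t₀ R ξ) = 0) :
    ((hCovDeriv Z (nuHgauge t₀ R) ξ).1, (hCovDeriv Z (nuHgauge t₀ R) ξ).2.1)
      - (2 * TD (uSph t₀ R) ξ /
          Real.sqrt (innerHV (hgrad (uSph t₀ R) ξ) (hgrad (uSph t₀ R) ξ)))
        • (Jmap Z - innerHV (etaGauge t₀ R ξ) Z • nuHgauge t₀ R ξ)
    = (2 * rad ξ / R ^ 2 * innerHV (etaGauge t₀ R ξ) Z) • etaGauge t₀ R ξ
      + (rad ξ / R ^ 2) • Z :=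
  gauge_sphere_umbilic_general n t₀ R hR ξ hmem hr Z htan
end

section
/- Consider smooth functions r(s) > 0, θ(s), t(s) solving the ODE system t'(s) = −2r(s)cos θ(s), θ'(s) = −(2c r³(s)/3 + φ₀)/r²(s), subject to the constraint (c/3)r³(s) − r(s)cos θ(s) = φ₀ with constants c > 0 and φ₀ > 0, defined for all s ≥ 0. Then for any s₁ < s₂ with θ(s₁) − θ(s₂) = 2π, the drop t(s₂) − t(s₁) = −(2/c)∫_{θ(s₂)}^{θ(s₁)} R(cos σ)cos²σ/((2c/3)R³(cos σ) + φ₀) dσ < 0 is a constant independent of s₁, s₂ (where R(·) is the function implicitly determined by the constraint, so that r(s) = R(cos θ(s))); consequently t(s) → −∞ as s → ∞. -/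
/-!
Dividing `t' = -2 r cos θ` by `θ' = -((2c/3) r³ + φ₀)/r²` gives `t' = g(θ) θ'` with
`g σ = 2 R³ cos σ / ((2c/3) R³ + φ₀)`, `R = R (cos σ)`, so `t s₂ - t s₁ = ∫_{θ s₁}^{θ s₂} g`.
Multiplying the constraint by `cos σ` shows `g = (2/c) (I + cos)`, where `I` is the integrand of
the drop formula; `cos` integrates to zero over a window of length `2π`, and `I ≥ 0` is positive
where `cos σ ≠ 0`. The constraint is known for `R (cos σ)` at every `σ` because
`θ' ≤ -min (2c/3) φ₀`, so `θ` decreases to `-∞` and `cos ∘ θ` sweeps out `[-1, 1]`. Finally `g` is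
`2π`-periodic with positive mean, so its primitive tends to `-∞` at `-∞`, and so does `t`.
-/

open Filter Set intervalIntegral Real

theorem min_le_mul_pow_three_add_div_sq {a b x : ℝ} (ha : 0 ≤ a) (hb : 0 ≤ b) (hx : 0 < x) :
    min a b ≤ (a * x ^ 3 + b) / x ^ 2 := by
  rw [le_div_iff₀ (by positivity)]
  rcases le_total 1 x with h | h
  · calc min a b * x ^ 2 ≤ a * x ^ 2 := by gcongr; exact min_le_left a b
      _ ≤ a * x ^ 3 := by gcongr; norm_num
      _ ≤ a * x ^ 3 + b := le_add_of_nonneg_right hb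
  · calc min a b * x ^ 2 ≤ b * 1 := by
          gcongr
          exacts [min_le_right a b, pow_le_one₀ hx.le h]
      _ ≤ a * x ^ 3 + b := by nlinarith [pow_pos hx 3]

theorem tendsto_atBot_of_deriv_le_neg {f : ℝ → ℝ} {m : ℝ} (hf : Differentiable ℝ f) (hm : 0 < m)
    (hf' : ∀ s, 0 ≤ s → deriv f s ≤ -m) : Tendsto f atTop atBot := by
  have hle : ∀ s, 0 ≤ s → f s ≤ f 0 + -m * s := fun s hs => by
    have := (convex_Ici (0 : ℝ)).image_sub_le_mul_sub_of_deriv_le hf.continuous.continuousOn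
      hf.differentiableOn (fun x hx => hf' x (interior_subset hx)) 0 self_mem_Ici s hs hs
    linarith
  refine tendsto_atBot_mono' atTop ((eventually_ge_atTop 0).mono hle) ?_
  exact tendsto_atBot_add_const_left _ _ (tendsto_id.const_mul_atTop_of_neg (neg_neg_of_pos hm))

theorem exists_nonneg_cos_comp_eq {θ : ℝ → ℝ} (hθ : Continuous θ) (hlim : Tendsto θ atTop atBot)
    (σ : ℝ) : ∃ s, 0 ≤ s ∧ cos (θ s) = cos σ := by
  obtain ⟨y, hy, hcos⟩ := cos_periodic.exists_mem_Ico two_pi_pos σ (θ 0 - 2 * π)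
  obtain ⟨S, hθS, hS⟩ := ((hlim.eventually (eventually_le_atBot y)).and
    (eventually_ge_atTop 0)).exists
  obtain ⟨s, hs, rfl⟩ :=
    intermediate_value_Icc' hS hθ.continuousOn ⟨hθS, by linarith [hy.2]⟩
  exact ⟨s, hs.1, hcos.symm⟩

/-- A change of variables `σ = θ s` that needs neither `θ'` nor `t'` to be integrable. -/
theorem sub_eq_intervalIntegral_of_deriv_eq_mul {t θ g : ℝ → ℝ} (hg : Continuous g)
    (ht : Differentiable ℝ t) (hθ : Differentiable ℝ θ) {a b : ℝ} (hab : a ≤ b)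
    (h : ∀ s ∈ Ico a b, deriv t s = g (θ s) * deriv θ s) :
    t b - t a = ∫ σ in θ a..θ b, g σ := by
  set F : ℝ → ℝ := fun s => t s - ∫ σ in θ a..θ s, g σ
  have hF : ∀ s, HasDerivAt F (deriv t s - g (θ s) * deriv θ s) s := fun s =>
    (ht s).hasDerivAt.sub
      ((hg.integral_hasStrictDerivAt (θ a) (θ s)).hasDerivAt.comp s (hθ s).hasDerivAt)
  have hconst := constant_of_has_deriv_right_zero
    (fun s _ => (hF s).continuousAt.continuousWithinAt)
    (fun s hs => by simpa [h s hs] using (hF s).hasDerivWithinAt) b ⟨hab, le_rfl⟩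
  simp only [F, integral_same, sub_zero] at hconst
  linarith

theorem tendsto_atBot_of_sub_eq_integral_comp {t θ g : ℝ → ℝ} {T a b : ℝ} (hg : Continuous g)
    (hper : Function.Periodic g T) (hT : 0 < T) (hmean : 0 < ∫ σ in 0..T, g σ)
    (hθ : Tendsto θ atTop atBot) (ht : ∀ᶠ s in atTop, t s - b = ∫ σ in a..θ s, g σ) :
    Tendsto t atTop atBot := by
  refine (tendsto_atBot_add_const_left _ (b - ∫ σ in 0..a, g σ)
    ((hper.tendsto_atBot_intervalIntegral_of_pos hmean hT).comp hθ)).congr' ?_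
  filter_upwards [ht] with s hs
  simp only [Function.comp_apply]
  linarith [integral_add_adjacent_intervals (hg.intervalIntegrable (μ := MeasureTheory.volume) 0 a)
    (hg.intervalIntegrable _ (θ s))]

noncomputable def dropIntegrand (c φ₀ : ℝ) (R : ℝ → ℝ) (σ : ℝ) : ℝ :=
  R (cos σ) * cos σ ^ 2 / (2 * c / 3 * R (cos σ) ^ 3 + φ₀)

/-- `dt/dθ` along the curve, written as a function of `θ` through `r = R (cos θ)`. -/
noncomputable def heightSlope (c φ₀ : ℝ) (R : ℝ → ℝ) (σ : ℝ) : ℝ :=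
  2 * R (cos σ) ^ 3 * cos σ / (2 * c / 3 * R (cos σ) ^ 3 + φ₀)

section

variable {c φ₀ : ℝ} {R : ℝ → ℝ}

theorem heightSlope_periodic : Function.Periodic (heightSlope c φ₀ R) (2 * π) := fun σ => by
  simp only [heightSlope, cos_add_two_pi]

theorem continuous_dropIntegrand (hc : 0 ≤ c) (hφ : 0 < φ₀) (hRc : Continuous R)
    (hRpos : ∀ σ, 0 < R (cos σ)) : Continuous (dropIntegrand c φ₀ R) :=
  Continuous.div (by fun_prop) (by fun_prop) fun σ => by have := hRpos σ; positivity

theorem continuous_heightSlope (hc : 0 ≤ c) (hφ : 0 < φ₀) (hRc : Continuous R)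
    (hRpos : ∀ σ, 0 < R (cos σ)) : Continuous (heightSlope c φ₀ R) :=
  Continuous.div (by fun_prop) (by fun_prop) fun σ => by have := hRpos σ; positivity

theorem heightSlope_eq (hc : 0 < c) (hφ : 0 < φ₀) {σ : ℝ} (hRpos : 0 < R (cos σ))
    (hcon : c / 3 * R (cos σ) ^ 3 - R (cos σ) * cos σ = φ₀) :
    heightSlope c φ₀ R σ = 2 / c * (dropIntegrand c φ₀ R σ + cos σ) := by
  unfold heightSlope dropIntegrand
  field_simp
  linear_combination (3 * cos σ) * hcon

theorem integral_heightSlope_eq (hc : 0 < c) (hφ : 0 < φ₀) (hRc : Continuous R)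
    (hRpos : ∀ σ, 0 < R (cos σ)) (hcon : ∀ σ, c / 3 * R (cos σ) ^ 3 - R (cos σ) * cos σ = φ₀)
    {a b : ℝ} (hab : sin a = sin b) :
    ∫ σ in a..b, heightSlope c φ₀ R σ = 2 / c * ∫ σ in a..b, dropIntegrand c φ₀ R σ := by
  rw [integral_congr fun σ _ => heightSlope_eq hc hφ (hRpos σ) (hcon σ), integral_const_mul,
    integral_add ((continuous_dropIntegrand hc.le hφ hRc hRpos).intervalIntegrable a b)
      (continuous_cos.intervalIntegrable a b), integral_cos, hab, sub_self, add_zero]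

theorem integral_dropIntegrand_pos (hc : 0 ≤ c) (hφ : 0 < φ₀) (hRc : Continuous R)
    (hRpos : ∀ σ, 0 < R (cos σ)) : 0 < ∫ σ in 0..2 * π, dropIntegrand c φ₀ R σ := by
  have hI := continuous_dropIntegrand hc hφ hRc hRpos
  have hnonneg : ∀ σ, 0 ≤ dropIntegrand c φ₀ R σ := fun σ => by
    have := hRpos σ; unfold dropIntegrand; positivity
  have hfirst : 0 < ∫ σ in 0..π / 2, dropIntegrand c φ₀ R σ := by
    refine intervalIntegral_pos_of_pos_on (hI.intervalIntegrable _ _) (fun σ hσ => ?_)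
      (by positivity)
    have := cos_pos_of_mem_Ioo ⟨by linarith [hσ.1, pi_pos], hσ.2⟩
    have := hRpos σ
    unfold dropIntegrand; positivity
  have hrest : 0 ≤ ∫ σ in π / 2..2 * π, dropIntegrand c φ₀ R σ :=
    integral_nonneg (by linarith [pi_pos]) fun σ _ => hnonneg σ
  rw [← integral_add_adjacent_intervals (hI.intervalIntegrable 0 (π / 2))
    (hI.intervalIntegrable _ _)]
  linarith

theorem integral_heightSlope_pos (hc : 0 < c) (hφ : 0 < φ₀) (hRc : Continuous R)
    (hRpos : ∀ σ, 0 < R (cos σ)) (hcon : ∀ σ, c / 3 * R (cos σ) ^ 3 - R (cos σ) * cos σ = φ₀) :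
    0 < ∫ σ in 0..2 * π, heightSlope c φ₀ R σ := by
  rw [integral_heightSlope_eq hc hφ hRc hRpos hcon (by rw [sin_zero, sin_two_pi])]
  exact mul_pos (by positivity) (integral_dropIntegrand_pos hc.le hφ hRc hRpos)

end

theorem heisenberg_ode_drop_general (c φ₀ : ℝ) (hc : 0 < c) (hφ : 0 < φ₀)
    (r θ t R : ℝ → ℝ)
    (hθ : Differentiable ℝ θ) (ht : Differentiable ℝ t)
    (hRc : Continuous R)
    (hrpos : ∀ s, 0 ≤ s → 0 < r s)
    (ht' : ∀ s, 0 ≤ s → deriv t s = -2 * r s * Real.cos (θ s))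
    (hθ' : ∀ s, 0 ≤ s → deriv θ s = -((2 * c * (r s) ^ 3 / 3 + φ₀) / (r s) ^ 2))
    (hcon : ∀ s, 0 ≤ s → c / 3 * (r s) ^ 3 - r s * Real.cos (θ s) = φ₀)
    (hR : ∀ s, 0 ≤ s → r s = R (Real.cos (θ s))) :
    (∀ s₁ s₂, 0 ≤ s₁ → s₁ < s₂ → θ s₁ - θ s₂ = 2 * Real.pi →
      t s₂ - t s₁
        = -(2 / c) * ∫ σ in (θ s₂)..(θ s₁),
            R (Real.cos σ) * (Real.cos σ) ^ 2
              / ((2 * c / 3) * (R (Real.cos σ)) ^ 3 + φ₀) ∧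
      t s₂ - t s₁ < 0) ∧
    (∀ s₁ s₂ s₁' s₂', 0 ≤ s₁ → s₁ < s₂ → 0 ≤ s₁' → s₁' < s₂' →
      θ s₁ - θ s₂ = 2 * Real.pi → θ s₁' - θ s₂' = 2 * Real.pi →
      t s₂ - t s₁ = t s₂' - t s₁') ∧
    Filter.Tendsto t Filter.atTop Filter.atBot := by
  have hθ_le : ∀ s, 0 ≤ s → deriv θ s ≤ -min (2 * c / 3) φ₀ := fun s hs => by
    rw [hθ' s hs, neg_le_neg_iff]
    refine (min_le_mul_pow_three_add_div_sq (by positivity) hφ.le (hrpos s hs)).trans_eq ?_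
    ring
  have hθ_lim := tendsto_atBot_of_deriv_le_neg hθ (lt_min (by positivity) hφ) hθ_le
  have hRσ : ∀ σ, 0 < R (cos σ) ∧ c / 3 * R (cos σ) ^ 3 - R (cos σ) * cos σ = φ₀ := fun σ => by
    obtain ⟨s, hs, hcos⟩ := exists_nonneg_cos_comp_eq hθ.continuous hθ_lim σ
    rw [← hcos, ← hR s hs]
    exact ⟨hrpos s hs, hcon s hs⟩
  have hRpos := fun σ => (hRσ σ).1
  have hRcon := fun σ => (hRσ σ).2
  have hdrop : ∀ s₁ s₂, 0 ≤ s₁ → s₁ ≤ s₂ →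
      t s₂ - t s₁ = ∫ σ in θ s₁..θ s₂, heightSlope c φ₀ R σ := fun s₁ s₂ hs₁ h₁₂ =>
    sub_eq_intervalIntegral_of_deriv_eq_mul (continuous_heightSlope hc.le hφ hRc hRpos) ht hθ h₁₂
      fun s hs => by
        have hs₀ : 0 ≤ s := hs₁.trans hs.1
        have := hrpos s hs₀
        rw [ht' s hs₀, hθ' s hs₀, heightSlope, ← hR s hs₀]
        field_simp
  have hwindow : ∀ s₁ s₂, 0 ≤ s₁ → s₁ < s₂ → θ s₁ - θ s₂ = 2 * π →
      t s₂ - t s₁ = -∫ σ in 0..2 * π, heightSlope c φ₀ R σ := fun s₁ s₂ hs₁ h₁₂ h2π => by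
    rw [hdrop s₁ s₂ hs₁ h₁₂.le, integral_symm, show θ s₁ = θ s₂ + 2 * π by linarith,
      heightSlope_periodic.intervalIntegral_add_eq (θ s₂) 0, zero_add]
  have hP := integral_heightSlope_pos hc hφ hRc hRpos hRcon
  refine ⟨fun s₁ s₂ hs₁ h₁₂ h2π => ⟨?_, ?_⟩, fun s₁ s₂ s₁' s₂' hs₁ h₁₂ hs₁' h₁₂' h2π h2π' => ?_, ?_⟩
  · rw [hdrop s₁ s₂ hs₁ h₁₂.le, integral_symm, integral_heightSlope_eq hc hφ hRc hRpos hRcon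
      (by rw [show θ s₁ = θ s₂ + 2 * π by linarith, sin_add_two_pi]), neg_mul]
    rfl
  · linarith [hwindow s₁ s₂ hs₁ h₁₂ h2π]
  · rw [hwindow s₁ s₂ hs₁ h₁₂ h2π, hwindow s₁' s₂' hs₁' h₁₂' h2π']
  · exact tendsto_atBot_of_sub_eq_integral_comp (continuous_heightSlope hc.le hφ hRc hRpos)
      heightSlope_periodic two_pi_pos hP hθ_lim
      ((eventually_ge_atTop 0).mono fun s hs => hdrop 0 s le_rfl hs)

/-- ODE analysis along an integral curve of η for the characterization of
gauge balls in ℍ¹: given smooth r > 0, θ, t with t' = −2r cos θ,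
θ' = −(2cr³/3 + φ₀)/r², constraint (c/3)r³ − r cos θ = φ₀ with c > 0, φ₀ > 0, and
r(s) = R(cos θ(s)) for a continuous R, then over any window with θ(s₁) − θ(s₂) = 2π the
drop t(s₂) − t(s₁) equals the (negative) integral
−(2/c)∫ R(cos σ)cos²σ/((2c/3)R(cos σ)³ + φ₀) dσ, is independent of the window, and
consequently t(s) → −∞ as s → ∞. -/
theorem heisenberg_ode_drop (c φ₀ : ℝ) (hc : 0 < c) (hφ : 0 < φ₀)
    (r θ t R : ℝ → ℝ)
    (hr : Differentiable ℝ r) (hθ : Differentiable ℝ θ) (ht : Differentiable ℝ t)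
    (hRc : Continuous R)
    (hrpos : ∀ s, 0 ≤ s → 0 < r s)
    (ht' : ∀ s, 0 ≤ s → deriv t s = -2 * r s * Real.cos (θ s))
    (hθ' : ∀ s, 0 ≤ s → deriv θ s = -((2 * c * (r s) ^ 3 / 3 + φ₀) / (r s) ^ 2))
    (hcon : ∀ s, 0 ≤ s → c / 3 * (r s) ^ 3 - r s * Real.cos (θ s) = φ₀)
    (hR : ∀ s, 0 ≤ s → r s = R (Real.cos (θ s))) :
    (∀ s₁ s₂, 0 ≤ s₁ → s₁ < s₂ → θ s₁ - θ s₂ = 2 * Real.pi →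
      t s₂ - t s₁
        = -(2 / c) * ∫ σ in (θ s₂)..(θ s₁),
            R (Real.cos σ) * (Real.cos σ) ^ 2
              / ((2 * c / 3) * (R (Real.cos σ)) ^ 3 + φ₀) ∧
      t s₂ - t s₁ < 0) ∧
    (∀ s₁ s₂ s₁' s₂', 0 ≤ s₁ → s₁ < s₂ → 0 ≤ s₁' → s₁' < s₂' →
      θ s₁ - θ s₂ = 2 * Real.pi → θ s₁' - θ s₂' = 2 * Real.pi →
      t s₂ - t s₁ = t s₂' - t s₁') ∧
    Filter.Tendsto t Filter.atTop Filter.atBot :=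
  heisenberg_ode_drop_general c φ₀ hc hφ r θ t R hθ ht hRc hrpos ht' hθ' hcon hR
end

section
/- Consider smooth functions r(s) ≥ 0 and t(s) with t'(s) = −(2c/3)r³(s) for a constant c > 0, and suppose there is a strictly increasing sequence s_k with r(s_k) = 0, r(s) > 0 on (s_k, s_{k+1}), and on each interval (s_k, s_{k+1}) there is a smooth θ(s) with cos θ(s) = (c/3)r²(s), θ'(s) = −(2c/3)r(s), sin θ(s) → +1 as s → s_k⁺ and sin θ(s) → −1 as s → s_{k+1}⁻. Then t(s_{k+1}) − t(s_k) = −6/c for every k; consequently t(s_k) → −∞, so if t is bounded there can be only finitely many such intervals. -/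
open scoped BigOperators

/-- Between consecutive returns to the vertical axis, the vertical
coordinate drops by exactly 6/c: if t' = −(2c/3)r³ with c > 0, r(s_k) = 0, r > 0 on each
interval (s_k, s_{k+1}), and on each such interval there is a smooth angle function θ_k
with cos θ_k = (c/3)r², θ_k' = −(2c/3)r, sin θ_k → +1 at the left endpoint and
sin θ_k → −1 at the right endpoint, then t(s_{k+1}) − t(s_k) = −6/c for every k, and
consequently t(s_k) → −∞ (so if t is bounded only finitely many such intervals exist). -/
theorem heisenberg_vertical_drop (c : ℝ) (hc : 0 < c)
    (r t : ℝ → ℝ) (s : ℕ → ℝ) (θ : ℕ → ℝ → ℝ)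
    (ht : Differentiable ℝ t) (hrc : Continuous r) (hr0 : ∀ x, 0 ≤ r x)
    (ht' : ∀ x, deriv t x = -(2 * c / 3) * (r x) ^ 3)
    (hs : StrictMono s)
    (hzero : ∀ k, r (s k) = 0)
    (hpos : ∀ k, ∀ x ∈ Set.Ioo (s k) (s (k + 1)), 0 < r x)
    (hθd : ∀ k, ∀ x ∈ Set.Ioo (s k) (s (k + 1)), DifferentiableAt ℝ (θ k) x)
    (hcos : ∀ k, ∀ x ∈ Set.Ioo (s k) (s (k + 1)), Real.cos (θ k x) = c / 3 * (r x) ^ 2)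
    (hθ' : ∀ k, ∀ x ∈ Set.Ioo (s k) (s (k + 1)), deriv (θ k) x = -(2 * c / 3) * r x)
    (hsin₁ : ∀ k, Filter.Tendsto (fun x => Real.sin (θ k x))
        (nhdsWithin (s k) (Set.Ioi (s k))) (nhds 1))
    (hsin₂ : ∀ k, Filter.Tendsto (fun x => Real.sin (θ k x))
        (nhdsWithin (s (k + 1)) (Set.Iio (s (k + 1)))) (nhds (-1))) :
    (∀ k, t (s (k + 1)) - t (s k) = -6 / c) ∧
    Filter.Tendsto (fun k => t (s k)) Filter.atTop Filter.atBot := by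
  have hc' : c ≠ 0 := ne_of_gt hc
  have key : ∀ k, t (s (k + 1)) - t (s k) = -6 / c := by
    intro k
    set a := s k with ha
    set b := s (k + 1) with hb
    have hab : a < b := hs (Nat.lt_succ_self k)
    set g : ℝ → ℝ := fun x => t x - 3 / c * Real.sin (θ k x) with hg
    -- g has derivative 0 on Ioo a b
    have hgd : ∀ x ∈ Set.Ioo a b, HasDerivAt g 0 x := by
      intro x hx
      have hθx := (hθd k x hx).hasDerivAt
      have hsin : HasDerivAt (fun x => Real.sin (θ k x))
          (Real.cos (θ k x) * deriv (θ k) x) x :=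
        (Real.hasDerivAt_sin (θ k x)).comp x hθx
      have htx : HasDerivAt t (-(2 * c / 3) * (r x) ^ 3) x := by
        have := (ht x).hasDerivAt
        rwa [ht' x] at this
      have := htx.sub (hsin.const_mul (3 / c))
      have heq : -(2 * c / 3) * r x ^ 3 -
          3 / c * (Real.cos (θ k x) * deriv (θ k) x) = 0 := by
        rw [hcos k x hx, hθ' k x hx]; field_simp; ring
      rwa [heq] at this
    -- hence g is constant on Ioo a b
    have hconv : Convex ℝ (Set.Ioo a b) := convex_Ioo a b
    have hgdiff : DifferentiableOn ℝ g (Set.Ioo a b) := fun x hx =>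
      (hgd x hx).differentiableAt.differentiableWithinAt
    have hgf : ∀ x ∈ Set.Ioo a b, fderivWithin ℝ g (Set.Ioo a b) x = 0 := by
      intro x hx
      rw [fderivWithin_of_isOpen isOpen_Ioo hx, (hgd x hx).hasFDerivAt.fderiv]
      ext y; simp
    have hgconst : ∀ x ∈ Set.Ioo a b, ∀ y ∈ Set.Ioo a b, g x = g y := fun x hx y hy =>
      hconv.is_const_of_fderivWithin_eq_zero hgdiff hgf hx hy
    obtain ⟨m, hm⟩ : ∃ m, m ∈ Set.Ioo a b := ⟨(a + b) / 2, by constructor <;> [skip; skip] <;> linarith [hab]⟩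
    -- limits at the endpoints
    have hIoo₁ : Set.Ioo a b ∈ nhdsWithin a (Set.Ioi a) := Ioo_mem_nhdsGT_of_mem ⟨le_refl a, hab⟩
    have hIoo₂ : Set.Ioo a b ∈ nhdsWithin b (Set.Iio b) := Ioo_mem_nhdsLT_of_mem ⟨hab, le_refl b⟩
    have hga : Filter.Tendsto g (nhdsWithin a (Set.Ioi a)) (nhds (t a - 3 / c * 1)) := by
      exact Filter.Tendsto.sub
        ((ht.continuous.tendsto a).mono_left nhdsWithin_le_nhds)
        ((hsin₁ k).const_mul (3 / c))
    have hgb : Filter.Tendsto g (nhdsWithin b (Set.Iio b)) (nhds (t b - 3 / c * (-1))) := by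
      exact Filter.Tendsto.sub
        ((ht.continuous.tendsto b).mono_left nhdsWithin_le_nhds)
        ((hsin₂ k).const_mul (3 / c))
    have hga' : Filter.Tendsto g (nhdsWithin a (Set.Ioi a)) (nhds (g m)) := by
      refine Filter.Tendsto.congr' ?_ tendsto_const_nhds
      filter_upwards [hIoo₁] with x hx using (hgconst m hm x hx)
    have hgb' : Filter.Tendsto g (nhdsWithin b (Set.Iio b)) (nhds (g m)) := by
      refine Filter.Tendsto.congr' ?_ tendsto_const_nhds
      filter_upwards [hIoo₂] with x hx using (hgconst m hm x hx)
    have e₁ : t a - 3 / c * 1 = g m := tendsto_nhds_unique hga hga'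
    have e₂ : t b - 3 / c * (-1) = g m := tendsto_nhds_unique hgb hgb'
    have : t b - 3 / c * (-1) = t a - 3 / c * 1 := by rw [e₁, e₂]
    field_simp at this ⊢
    linarith
  refine ⟨key, ?_⟩
  have hval : ∀ k, t (s k) = t (s 0) - 6 / c * k := by
    intro k
    induction k with
    | zero => simp
    | succ n ih =>
      have h1 : t (s (n + 1)) = t (s n) - 6 / c := by have := key n; rw [neg_div] at this; linarith
      rw [h1, ih]; push_cast; ring
  have h1 : Filter.Tendsto (fun k : ℕ => 6 / c * (k : ℝ)) Filter.atTop Filter.atTop :=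
    Filter.Tendsto.const_mul_atTop (by positivity) tendsto_natCast_atTop_atTop
  have h2 : Filter.Tendsto (fun k : ℕ => -(6 / c * (k : ℝ))) Filter.atTop Filter.atBot :=
    Filter.tendsto_neg_atTop_atBot.comp h1
  have h3 := Filter.tendsto_atBot_add_const_left Filter.atTop (t (s 0)) h2
  refine h3.congr fun k => ?_
  rw [hval k]; ring
end
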